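/- Let D = {(1,x,y,0,0) ∈ ℝ⁵ : x² + (y-1)² ≤ 1}, D₁ = {(1,x,y,0,0) : x³ - (y-1)³ ≤ 1, x ≥ 0, 0 ≤ y ≤ 1}, α(t) = (1,0,t²,t,t³), β(t) = (1,t/2,t³,-t/2,t³), γ(t) = (1,-t/2,t³,-t/2,t³) for t ∈ [0,1], K₁ = cone(D ∪ D₁ ∪ α[0,1] ∪ β[0,1] ∪ γ[0,1]) and F₁ = cone(D ∪ D₁). Then the idempotent linear map P₁ given (in standard coordinates (l,x,y,z,s)) by P₁(l,x,y,z,s) = (l, x - z, y, 0, 0) satisfies P₁(K₁) = F₁; in particular F₁ is a projectionally exposed face of K₁. -/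

import Mathlib

/-!
`P₁` fixes every point with `z = s = 0`, in particular all of `D ∪ D₁`, and it sends the curves
into `D ∪ D₁`: `P₁ α(t) = (1, -t, t², 0, 0)` and `P₁ γ(t) = (1, 0, t³, 0, 0)` lie in `D`, and
`P₁ β(t) = (1, t, t³, 0, 0)` lies in `D₁`. Since a linear map commutes with taking conic hulls,
`P₁(K₁) = cone(P₁(D ∪ D₁ ∪ α ∪ β ∪ γ)) = cone(D ∪ D₁)`.
-/

/-- The convex conic hull of a set in `ℝ⁵`. -/
def coneHull (S : Set (EuclideanSpace ℝ (Fin 5))) : Set (EuclideanSpace ℝ (Fin 5)) :=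
  {x | ∃ c : ℝ, 0 ≤ c ∧ ∃ y ∈ convexHull ℝ S, x = c • y}

/-- The disk `D = {(1,x,y,0,0) : x² + (y-1)² ≤ 1}`. -/
def diskD : Set (EuclideanSpace ℝ (Fin 5)) :=
  {v | v 0 = 1 ∧ (v 1) ^ 2 + (v 2 - 1) ^ 2 ≤ 1 ∧ v 3 = 0 ∧ v 4 = 0}

/-- The set `D₁ = {(1,x,y,0,0) : x³ - (y-1)³ ≤ 1, x ≥ 0, 0 ≤ y ≤ 1}`. -/
def setD1 : Set (EuclideanSpace ℝ (Fin 5)) :=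
  {v | v 0 = 1 ∧ (v 1) ^ 3 - (v 2 - 1) ^ 3 ≤ 1 ∧ 0 ≤ v 1 ∧ 0 ≤ v 2 ∧ v 2 ≤ 1 ∧
    v 3 = 0 ∧ v 4 = 0}

/-- The curve `α(t) = (1, 0, t², t, t³)`. -/
noncomputable def curveA (t : ℝ) : EuclideanSpace ℝ (Fin 5) := WithLp.toLp 2 ![1, 0, t ^ 2, t, t ^ 3]

/-- The curve `β(t) = (1, t/2, t³, -t/2, t³)`. -/
noncomputable def curveB (t : ℝ) : EuclideanSpace ℝ (Fin 5) := WithLp.toLp 2 ![1, t / 2, t ^ 3, -(t / 2), t ^ 3]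

/-- The curve `γ(t) = (1, -t/2, t³, -t/2, t³)`. -/
noncomputable def curveC (t : ℝ) : EuclideanSpace ℝ (Fin 5) := WithLp.toLp 2 ![1, -(t / 2), t ^ 3, -(t / 2), t ^ 3]

open Set

lemma LinearMap.image_coneHull (P : EuclideanSpace ℝ (Fin 5) →ₗ[ℝ] EuclideanSpace ℝ (Fin 5))
    (S : Set (EuclideanSpace ℝ (Fin 5))) :
    P '' coneHull S = coneHull (P '' S) := by
  ext x
  constructor
  · rintro ⟨_, ⟨c, hc, y, hy, rfl⟩, rfl⟩
    exact ⟨c, hc, P y, P.image_convexHull S ▸ mem_image_of_mem P hy, P.map_smul c y⟩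
  · rintro ⟨c, hc, _, hy, rfl⟩
    rw [← P.image_convexHull] at hy
    obtain ⟨z, hz, rfl⟩ := hy
    exact ⟨c • z, ⟨c, hc, z, hz, rfl⟩, P.map_smul c z⟩

noncomputable def projP1 : EuclideanSpace ℝ (Fin 5) →ₗ[ℝ] EuclideanSpace ℝ (Fin 5) where
  toFun v := WithLp.toLp 2 ![v 0, v 1 - v 3, v 2, 0, 0]
  map_add' x y := by
    ext i
    fin_cases i <;> simp; ring
  map_smul' c x := by
    ext i
    fin_cases i <;> simp; ring

lemma projP1_apply (v : EuclideanSpace ℝ (Fin 5)) :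
    projP1 v = WithLp.toLp 2 ![v 0, v 1 - v 3, v 2, 0, 0] := rfl

lemma projP1_apply_of_eq_zero {v : EuclideanSpace ℝ (Fin 5)} (h3 : v 3 = 0) (h4 : v 4 = 0) :
    projP1 v = v := by
  ext i
  fin_cases i <;> simp [projP1_apply, h3, h4]

lemma projP1_idempotent (v : EuclideanSpace ℝ (Fin 5)) : projP1 (projP1 v) = projP1 v :=
  projP1_apply_of_eq_zero (by simp [projP1_apply]) (by simp [projP1_apply])

lemma projP1_curveA_mem_diskD {t : ℝ} (ht : t ∈ Icc (0 : ℝ) 1) : projP1 (curveA t) ∈ diskD := by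
  obtain ⟨ht0, ht1⟩ := ht
  have hsq : t ^ 2 ≤ 1 := pow_le_one₀ ht0 ht1
  have key : (-t) ^ 2 + (t ^ 2 - 1) ^ 2 ≤ 1 := by
    nlinarith [mul_nonneg (sq_nonneg t) (sub_nonneg.2 hsq)]
  simpa [diskD, projP1_apply, curveA] using key

lemma projP1_curveB_mem_setD1 {t : ℝ} (ht : t ∈ Icc (0 : ℝ) 1) : projP1 (curveB t) ∈ setD1 := by
  obtain ⟨ht0, ht1⟩ := ht
  have hu0 : 0 ≤ t ^ 3 := by positivity
  have hu1 : t ^ 3 ≤ 1 := pow_le_one₀ ht0 ht1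
  -- with `u = t³ ∈ [0, 1]` the defining inequality of `D₁` reads `(1 - u)³ ≤ 1 - u`
  have key : t ^ 3 ≤ 1 + (t ^ 3 - 1) ^ 3 := by
    nlinarith [mul_nonneg (mul_nonneg (sub_nonneg.2 hu1) hu0) (by linarith : (0 : ℝ) ≤ 2 - t ^ 3)]
  simp only [setD1, projP1_apply, curveB]
  simpa using ⟨key, ht0, hu0, hu1⟩

lemma projP1_curveC_mem_diskD {t : ℝ} (ht : t ∈ Icc (0 : ℝ) 1) : projP1 (curveC t) ∈ diskD := by
  obtain ⟨ht0, ht1⟩ := ht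
  have hu0 : 0 ≤ t ^ 3 := by positivity
  have hu1 : t ^ 3 ≤ 1 := pow_le_one₀ ht0 ht1
  have key : (t ^ 3 - 1) ^ 2 ≤ 1 := by nlinarith
  simpa [diskD, projP1_apply, curveC] using key

lemma projP1_image_generators :
    projP1 '' (diskD ∪ setD1 ∪ curveA '' Icc (0 : ℝ) 1 ∪
      curveB '' Icc (0 : ℝ) 1 ∪ curveC '' Icc (0 : ℝ) 1) = diskD ∪ setD1 := by
  have fix_diskD : ∀ v ∈ diskD, projP1 v = v := fun v hv =>
    projP1_apply_of_eq_zero hv.2.2.1 hv.2.2.2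
  have fix_setD1 : ∀ v ∈ setD1, projP1 v = v := fun v hv =>
    projP1_apply_of_eq_zero hv.2.2.2.2.2.1 hv.2.2.2.2.2.2
  apply subset_antisymm
  · rintro _ ⟨v, hv, rfl⟩
    rcases hv with ((((hD | hD1) | ⟨t, ht, rfl⟩) | ⟨t, ht, rfl⟩) | ⟨t, ht, rfl⟩)
    · exact Or.inl (by rwa [fix_diskD v hD])
    · exact Or.inr (by rwa [fix_setD1 v hD1])
    · exact Or.inl (projP1_curveA_mem_diskD ht)
    · exact Or.inr (projP1_curveB_mem_setD1 ht)
    · exact Or.inl (projP1_curveC_mem_diskD ht)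
  · rintro v (hD | hD1)
    · exact ⟨v, Or.inl (Or.inl (Or.inl (Or.inl hD))), fix_diskD v hD⟩
    · exact ⟨v, Or.inl (Or.inl (Or.inl (Or.inr hD1))), fix_setD1 v hD1⟩

/-- Proposition 4.3 (for `i = 1`): the idempotent linear map
`P₁(l,x,y,z,s) = (l, x - z, y, 0, 0)` maps `K₁ = cone(D ∪ D₁ ∪ α[0,1] ∪ β[0,1] ∪ γ[0,1])`
onto `F₁ = cone(D ∪ D₁)`; in particular `F₁` is a projectionally exposed face of `K₁`. -/
theorem stmt14 :
    ∃ P : EuclideanSpace ℝ (Fin 5) →ₗ[ℝ] EuclideanSpace ℝ (Fin 5),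
      (∀ v, P v = ![v 0, v 1 - v 3, v 2, 0, 0]) ∧
      (∀ v, P (P v) = P v) ∧
      ⇑P '' coneHull (diskD ∪ setD1 ∪ curveA '' Set.Icc (0 : ℝ) 1 ∪
          curveB '' Set.Icc (0 : ℝ) 1 ∪ curveC '' Set.Icc (0 : ℝ) 1) =
        coneHull (diskD ∪ setD1) := by
  refine ⟨projP1, fun _ => rfl, projP1_idempotent, ?_⟩
  rw [LinearMap.image_coneHull, projP1_image_generators]
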